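/- There exist constants C < ∞ and γ > 0 such that P(R_t > x) ≤ C e^{−γ x} for all t ≥ 0 and all x ≥ 0, with C and γ not depending on t and x. -/

import Mathlib

open MeasureTheory ProbabilityTheory
open scoped ENNReal

/-- Partial sums `S n = Z₁ + ⋯ + Z_n` (with `S 0 = 0`) of the sequence `Z`. -/
noncomputable def renewalSum {Ω : Type*} (Z : ℕ → Ω → ℝ) (n : ℕ) (ω : Ω) : ℝ :=
  ∑ i ∈ Finset.range n, Z i ω

/-- `ν_t = max {n ≥ 0 : S_n ≤ t}` (finite almost surely). -/
noncomputable def renewalCount {Ω : Type*} (Z : ℕ → Ω → ℝ) (t : ℝ) (ω : Ω) : ℕ :=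
  sSup {n : ℕ | renewalSum Z n ω ≤ t}

/-- The residual waiting time `R_t = S_{ν_t + 1} - t`. -/
noncomputable def renewalResidual {Ω : Type*} (Z : ℕ → Ω → ℝ) (t : ℝ) (ω : Ω) : ℝ :=
  renewalSum Z (renewalCount Z t ω + 1) ω - t

open Filter Topology

set_option linter.unusedSectionVars false
set_option maxHeartbeats 1000000

section stmtAux
variable {Ω : Type*} [MeasurableSpace Ω] {μ : Measure Ω} [IsProbabilityMeasure μ]
  {Z : ℕ → Ω → ℝ}

lemma aux_meas (hmeas : ∀ k, Measurable (Z k)) (n : ℕ) : Measurable (renewalSum Z n) :=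
  Finset.measurable_sum _ (fun i _ => hmeas i)

lemma aux_mono (hpos : ∀ k ω, 0 < Z k ω) (ω : Ω) {k n : ℕ} (h : k ≤ n) :
    renewalSum Z k ω ≤ renewalSum Z n ω :=
  Finset.sum_le_sum_of_subset_of_nonneg (Finset.range_subset_range.2 h)
    (fun i _ _ => (hpos i ω).le)

lemma aux_split (ω : Ω) {k n : ℕ} (h : k ≤ n) :
    renewalSum Z n ω = renewalSum Z k ω + ∑ i ∈ Finset.Ico k n, Z i ω := by
  unfold renewalSum
  rw [Finset.range_eq_Ico, ← Finset.sum_Ico_consecutive _ (Nat.zero_le k) h, ← Finset.range_eq_Ico]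

lemma aux_indep_sum (hindep : iIndepFun Z μ)
    (hmeas : ∀ k, Measurable (Z k)) {s t : Finset ℕ} (hst : Disjoint s t) :
    IndepFun (fun ω => ∑ i ∈ s, Z i ω) (fun ω => ∑ i ∈ t, Z i ω) μ := by
  have h := (hindep.indepFun_finset s t hst hmeas).comp
    (φ := fun v : {x // x ∈ s} → ℝ => ∑ i, v i)
    (ψ := fun v : {x // x ∈ t} → ℝ => ∑ i, v i)
    (Finset.measurable_sum _ (fun i _ => measurable_pi_apply i))
    (Finset.measurable_sum _ (fun i _ => measurable_pi_apply i))
  have e1 : ((fun v : {x // x ∈ s} → ℝ => ∑ i, v i) ∘ fun a i => Z (↑i) a)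
      = fun ω => ∑ i ∈ s, Z i ω := by
    funext ω; exact Finset.sum_attach s (fun i => Z i ω)
  have e2 : ((fun v : {x // x ∈ t} → ℝ => ∑ i, v i) ∘ fun a i => Z (↑i) a)
      = fun ω => ∑ i ∈ t, Z i ω := by
    funext ω; exact Finset.sum_attach t (fun i => Z i ω)
  rw [e1, e2] at h; exact h

lemma aux_phi_small (hmeas : ∀ k, Measurable (Z k)) (hpos : ∀ k ω, 0 < Z k ω) :
    ∃ N : ℕ, ∫⁻ ω, ENNReal.ofReal (Real.exp (-(N:ℝ) * Z 0 ω)) ∂μ ≤ 1/2 := by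
  have htend : Tendsto (fun n : ℕ => ∫⁻ ω, ENNReal.ofReal (Real.exp (-(n:ℝ) * Z 0 ω)) ∂μ)
      atTop (𝓝 (∫⁻ _ω, 0 ∂μ)) := by
    apply tendsto_lintegral_of_dominated_convergence (bound := fun _ => 1)
    · exact fun n => ENNReal.measurable_ofReal.comp
        (Real.measurable_exp.comp ((measurable_const.mul (hmeas 0))))
    · intro n
      filter_upwards with ω
      rw [show ((1:ℝ≥0∞)) = ENNReal.ofReal 1 by simp]
      exact ENNReal.ofReal_le_ofReal (Real.exp_le_one_iff.2 (by nlinarith [(hpos 0 ω)]))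
    · simp
    · filter_upwards with ω
      have h1 : Tendsto (fun n : ℕ => Real.exp (-(n:ℝ) * Z 0 ω)) atTop (𝓝 0) := by
        have : ∀ n : ℕ, Real.exp (-(n:ℝ) * Z 0 ω) = (Real.exp (- Z 0 ω))^n := by
          intro n; rw [← Real.exp_nat_mul]; ring_nf
        simp_rw [this]
        exact tendsto_pow_atTop_nhds_zero_of_lt_one (Real.exp_pos _).le
          (Real.exp_lt_one_iff.2 (by linarith [hpos 0 ω]))
      simpa using (ENNReal.tendsto_ofReal h1)
  rw [lintegral_zero] at htend
  have := htend.eventually_lt_const (show (0:ℝ≥0∞) < 1/2 by norm_num)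
  obtain ⟨N, hN⟩ := this.exists
  exact ⟨N, hN.le⟩

lemma aux_prod_lintegral (hmeas : ∀ k, Measurable (Z k))
    (hindep : iIndepFun Z μ) (l : ℝ) (s : Finset ℕ) :
    ∫⁻ ω, ∏ i ∈ s, ENNReal.ofReal (Real.exp (-l * Z i ω)) ∂μ
      = ∏ i ∈ s, ∫⁻ ω, ENNReal.ofReal (Real.exp (-l * Z i ω)) ∂μ := by
  classical
  induction s using Finset.induction_on with
  | empty => simp
  | @insert a s ha ih =>
    have hmg : ∀ i : ℕ, Measurable (fun ω => ENNReal.ofReal (Real.exp (-l * Z i ω))) :=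
      fun i => ENNReal.measurable_ofReal.comp
        (Real.measurable_exp.comp (measurable_const.mul (hmeas i)))
    have hind : IndepFun (fun ω => ENNReal.ofReal (Real.exp (-l * Z a ω)))
        (fun ω => ∏ i ∈ s, ENNReal.ofReal (Real.exp (-l * Z i ω))) μ := by
      have h := (hindep.indepFun_finset {a} s (Finset.disjoint_singleton_left.2 ha) hmeas).comp
        (φ := fun v : {x // x ∈ ({a} : Finset ℕ)} → ℝ =>
          ENNReal.ofReal (Real.exp (-l * v ⟨a, Finset.mem_singleton_self a⟩)))
        (ψ := fun v : {x // x ∈ s} → ℝ => ∏ i, ENNReal.ofReal (Real.exp (-l * v i)))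
        (ENNReal.measurable_ofReal.comp
          (Real.measurable_exp.comp (measurable_const.mul (measurable_pi_apply _))))
        (Finset.measurable_prod _ (fun i _ => ENNReal.measurable_ofReal.comp
          (Real.measurable_exp.comp (measurable_const.mul (measurable_pi_apply i)))))
      have e2 : ((fun v : {x // x ∈ s} → ℝ => ∏ i, ENNReal.ofReal (Real.exp (-l * v i)))
          ∘ fun ω (i : {x // x ∈ s}) => Z (↑i) ω)
          = fun ω => ∏ i ∈ s, ENNReal.ofReal (Real.exp (-l * Z i ω)) := by
        funext ω
        exact Finset.prod_attach s (fun i => ENNReal.ofReal (Real.exp (-l * Z i ω)))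
      rw [e2] at h
      exact h
    rw [Finset.prod_insert ha]
    have := lintegral_mul_eq_lintegral_mul_lintegral_of_indepFun''
      ((hmg a).aemeasurable)
      ((Finset.measurable_prod s (fun i _ => hmg i)).aemeasurable) hind
    simp_rw [Finset.prod_insert ha]
    rw [this, ih]

lemma aux_chernoff (hmeas : ∀ k, Measurable (Z k))
    (hindep : iIndepFun Z μ)
    (hident : ∀ k, IdentDistrib (Z k) (Z 0) μ μ) (N : ℕ)
    (hφ : ∫⁻ ω, ENNReal.ofReal (Real.exp (-(N:ℝ) * Z 0 ω)) ∂μ ≤ 1/2) (k n : ℕ) :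
    μ {ω | ∑ i ∈ Finset.Ico k n, Z i ω ≤ 1}
      ≤ ENNReal.ofReal (Real.exp N) * (1/2)^(n-k) := by
  set l : ℝ := (N : ℝ) with hl
  have hl0 : 0 ≤ l := Nat.cast_nonneg N
  set f : Ω → ℝ≥0∞ := fun ω => ∏ i ∈ Finset.Ico k n, ENNReal.ofReal (Real.exp (-l * Z i ω))
    with hf
  have hfmeas : Measurable f := Finset.measurable_prod _ (fun i _ =>
    ENNReal.measurable_ofReal.comp (Real.measurable_exp.comp (measurable_const.mul (hmeas i))))
  have hfe : ∀ ω, f ω = ENNReal.ofReal (Real.exp (-l * ∑ i ∈ Finset.Ico k n, Z i ω)) := by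
    intro ω
    rw [Finset.mul_sum, Real.exp_sum, ENNReal.ofReal_prod_of_nonneg
      (fun i _ => (Real.exp_pos _).le)]
  have hsub : {ω | ∑ i ∈ Finset.Ico k n, Z i ω ≤ 1}
      ⊆ {ω | ENNReal.ofReal (Real.exp (-l)) ≤ f ω} := by
    intro ω hω
    rw [Set.mem_setOf_eq, hfe ω]
    apply ENNReal.ofReal_le_ofReal
    apply Real.exp_le_exp.2
    have : l * (∑ i ∈ Finset.Ico k n, Z i ω) ≤ l * 1 :=
      mul_le_mul_of_nonneg_left hω hl0
    nlinarith
  have hmarkov := mul_meas_ge_le_lintegral₀ (μ := μ) hfmeas.aemeasurable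
    (ENNReal.ofReal (Real.exp (-l)))
  have hint : ∫⁻ ω, f ω ∂μ ≤ (1/2)^(n-k) := by
    rw [hf]
    rw [aux_prod_lintegral hmeas hindep l (Finset.Ico k n)]
    have : ∀ i, ∫⁻ ω, ENNReal.ofReal (Real.exp (-l * Z i ω)) ∂μ
        = ∫⁻ ω, ENNReal.ofReal (Real.exp (-l * Z 0 ω)) ∂μ := by
      intro i
      have hg : Measurable (fun y : ℝ => ENNReal.ofReal (Real.exp (-l * y))) :=
        ENNReal.measurable_ofReal.comp
          (Real.measurable_exp.comp (measurable_const.mul measurable_id))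
      have hid : IdentDistrib (fun ω => ENNReal.ofReal (Real.exp (-l * Z i ω)))
          (fun ω => ENNReal.ofReal (Real.exp (-l * Z 0 ω))) μ μ := (hident i).comp hg
      exact hid.lintegral_eq
    calc ∏ i ∈ Finset.Ico k n, ∫⁻ ω, ENNReal.ofReal (Real.exp (-l * Z i ω)) ∂μ
        = ∏ _i ∈ Finset.Ico k n, ∫⁻ ω, ENNReal.ofReal (Real.exp (-l * Z 0 ω)) ∂μ :=
          Finset.prod_congr rfl (fun i _ => this i)
      _ = (∫⁻ ω, ENNReal.ofReal (Real.exp (-l * Z 0 ω)) ∂μ)^(n-k) := by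
          rw [Finset.prod_const, Nat.card_Ico]
      _ ≤ (1/2)^(n-k) := pow_le_pow_left' hφ _
  have key : ENNReal.ofReal (Real.exp (-l)) * μ {ω | ∑ i ∈ Finset.Ico k n, Z i ω ≤ 1}
      ≤ (1/2)^(n-k) := by
    calc ENNReal.ofReal (Real.exp (-l)) * μ {ω | ∑ i ∈ Finset.Ico k n, Z i ω ≤ 1}
        ≤ ENNReal.ofReal (Real.exp (-l)) * μ {ω | ENNReal.ofReal (Real.exp (-l)) ≤ f ω} :=
          mul_le_mul_right (measure_mono hsub) _
      _ ≤ ∫⁻ ω, f ω ∂μ := hmarkov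
      _ ≤ (1/2)^(n-k) := hint
  have hcancel : ENNReal.ofReal (Real.exp l) * ENNReal.ofReal (Real.exp (-l)) = 1 := by
    rw [← ENNReal.ofReal_mul (Real.exp_pos _).le, ← Real.exp_add]
    simp
  calc μ {ω | ∑ i ∈ Finset.Ico k n, Z i ω ≤ 1}
      = ENNReal.ofReal (Real.exp l) * (ENNReal.ofReal (Real.exp (-l))
          * μ {ω | ∑ i ∈ Finset.Ico k n, Z i ω ≤ 1}) := by
        rw [← mul_assoc, hcancel, one_mul]
    _ ≤ ENNReal.ofReal (Real.exp l) * (1/2)^(n-k) := mul_le_mul_right key _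

lemma aux_renewal_inc (hmeas : ∀ k, Measurable (Z k))
    (hindep : iIndepFun Z μ)
    (hident : ∀ k, IdentDistrib (Z k) (Z 0) μ μ)
    (hpos : ∀ k ω, 0 < Z k ω) (N : ℕ)
    (hφ : ∫⁻ ω, ENNReal.ofReal (Real.exp (-(N:ℝ) * Z 0 ω)) ∂μ ≤ 1/2) (s : ℝ) :
    ∑' n, μ {ω | s - 1 < renewalSum Z n ω ∧ renewalSum Z n ω ≤ s}
      ≤ ENNReal.ofReal (Real.exp N) * 2 := by
  classical
  set E := ENNReal.ofReal (Real.exp N) with hE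
  set B : ℕ → Set Ω := fun m =>
    {ω | s - 1 < renewalSum Z m ω ∧ ∀ l < m, renewalSum Z l ω ≤ s - 1} with hB
  set C : ℕ → ℕ → Set Ω := fun m n => {ω | ∑ i ∈ Finset.Ico m n, Z i ω ≤ 1} with hC
  have hBmeas : ∀ m, MeasurableSet (B m) := by
    intro m
    apply MeasurableSet.inter
    · exact measurableSet_lt measurable_const (aux_meas hmeas m)
    · show MeasurableSet {ω | ∀ l < m, renewalSum Z l ω ≤ s - 1}
      have : {ω | ∀ l < m, renewalSum Z l ω ≤ s - 1}
          = ⋂ l ∈ Set.Iio m, {ω | renewalSum Z l ω ≤ s - 1} := by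
        ext ω; simp
      rw [this]
      exact MeasurableSet.biInter (Set.to_countable _)
        (fun l _ => measurableSet_le (aux_meas hmeas l) measurable_const)
  have hCmeas : ∀ m n, MeasurableSet (C m n) := fun m n =>
    measurableSet_le (Finset.measurable_sum _ (fun i _ => hmeas i)) measurable_const
  have hBdisj : Pairwise (Function.onFun Disjoint B) := by
    intro m m' hmm'
    rcases hmm'.lt_or_gt with h | h
    · simp only [Function.onFun]
      rw [Set.disjoint_left]
      rintro ω ⟨h1, _⟩ ⟨_, h2'⟩
      exact absurd (h2' m h) (not_le.2 h1)
    · simp only [Function.onFun]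
      rw [Set.disjoint_left]
      rintro ω ⟨_, h2⟩ ⟨h1', _⟩
      exact absurd (h2 m' h) (not_le.2 h1')
  have hBsum : ∑' m, μ (B m) ≤ 1 := by
    have := tsum_measure_le_measure_univ (μ := μ)
      (fun m => (hBmeas m).nullMeasurableSet)
      (fun m m' h => ((hBdisj h).aedisjoint))
    simpa using this
  -- cover
  have hcover : ∀ n, {ω | s - 1 < renewalSum Z n ω ∧ renewalSum Z n ω ≤ s}
      ⊆ ⋃ m ∈ Finset.range (n+1), (B m ∩ C m n) := by
    intro n ω hω
    obtain ⟨h1, h2⟩ := hω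
    have hex : ∃ m, s - 1 < renewalSum Z m ω := ⟨n, h1⟩
    set m := Nat.find hex with hm
    have hspec : s - 1 < renewalSum Z m ω := Nat.find_spec hex
    have hmin : ∀ l < m, renewalSum Z l ω ≤ s - 1 := fun l hl =>
      not_lt.1 (Nat.find_min hex hl)
    have hmn : m ≤ n := Nat.find_le h1
    refine Set.mem_biUnion (Finset.mem_range.2 (Nat.lt_succ_of_le hmn)) ⟨⟨hspec, hmin⟩, ?_⟩
    have := aux_split (Z := Z) ω hmn
    simp only [hC, Set.mem_setOf_eq]
    linarith
  -- product rule
  have hprod : ∀ m n, m ≤ n → μ (B m ∩ C m n) = μ (B m) * μ (C m n) := by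
    intro m n hmn
    match m with
    | 0 =>
      by_cases hs : s - 1 < 0
      · have : B 0 = Set.univ := by
          ext ω
          simp [hB, renewalSum, hs]
        rw [this, Set.univ_inter, measure_univ, one_mul]
      · have : B 0 = ∅ := by
          ext ω
          simp [hB, renewalSum, hs]
        simp [this]
    | (q+1) =>
      set D : ℕ → Set Ω := fun l => {ω | renewalSum Z l ω ≤ s - 1} with hD
      have hDsub : D (q+1) ⊆ D q := fun ω h =>
        le_trans (aux_mono hpos ω (Nat.le_succ q)) h
      have hBq : B (q+1) = D q \ D (q+1) := by
        ext ω
        constructor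
        · rintro ⟨h1, h2⟩
          exact ⟨h2 q (Nat.lt_succ_self q), fun h => absurd h (not_le.2 h1)⟩
        · rintro ⟨h1, h2⟩
          refine ⟨not_le.1 h2, fun l hl => ?_⟩
          exact le_trans (aux_mono hpos ω (Nat.lt_succ_iff.1 hl)) h1
      have hindDq : μ (D q ∩ C (q+1) n) = μ (D q) * μ (C (q+1) n) := by
        have hd : Disjoint (Finset.range q) (Finset.Ico (q+1) n) := by
          rw [Finset.disjoint_left]
          intro a ha ha'
          rw [Finset.mem_range] at ha
          rw [Finset.mem_Ico] at ha'
          omega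
        have hi := aux_indep_sum hindep hmeas hd
        have := hi.measure_inter_preimage_eq_mul (Set.Iic (s-1)) (Set.Iic (1:ℝ))
          measurableSet_Iic measurableSet_Iic
        exact this
      have hindDq1 : μ (D (q+1) ∩ C (q+1) n) = μ (D (q+1)) * μ (C (q+1) n) := by
        have hd : Disjoint (Finset.range (q+1)) (Finset.Ico (q+1) n) := by
          rw [Finset.disjoint_left]
          intro a ha ha'
          rw [Finset.mem_range] at ha
          rw [Finset.mem_Ico] at ha'
          omega
        have hi := aux_indep_sum hindep hmeas hd
        have := hi.measure_inter_preimage_eq_mul (Set.Iic (s-1)) (Set.Iic (1:ℝ))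
          measurableSet_Iic measurableSet_Iic
        exact this
      have hdiff : B (q+1) ∩ C (q+1) n = (D q ∩ C (q+1) n) \ (D (q+1) ∩ C (q+1) n) := by
        rw [hBq]; ext ω; simp only [Set.mem_inter_iff, Set.mem_diff]; tauto
      have hDmeas : ∀ l, MeasurableSet (D l) :=
        fun l => measurableSet_le (aux_meas hmeas l) measurable_const
      rw [hdiff, measure_diff (Set.inter_subset_inter hDsub (le_refl _))
        ((hDmeas (q+1)).inter (hCmeas (q+1) n)).nullMeasurableSet (measure_ne_top μ _),
        hindDq, hindDq1, hBq,
        measure_diff hDsub (hDmeas (q+1)).nullMeasurableSet (measure_ne_top μ _),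
        ENNReal.sub_mul (fun _ _ => measure_ne_top μ _)]
  -- assemble
  set g : ℕ → ℕ → ℝ≥0∞ := fun m n => if m ≤ n then μ (B m) * (E * (1/2)^(n-m)) else 0 with hg
  have step1 : ∀ n, μ {ω | s - 1 < renewalSum Z n ω ∧ renewalSum Z n ω ≤ s}
      ≤ ∑' m, g m n := by
    intro n
    calc μ {ω | s - 1 < renewalSum Z n ω ∧ renewalSum Z n ω ≤ s}
        ≤ μ (⋃ m ∈ Finset.range (n+1), (B m ∩ C m n)) := measure_mono (hcover n)
      _ ≤ ∑ m ∈ Finset.range (n+1), μ (B m ∩ C m n) := measure_biUnion_finset_le _ _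
      _ ≤ ∑ m ∈ Finset.range (n+1), g m n := by
          apply Finset.sum_le_sum
          intro m hm
          rw [Finset.mem_range, Nat.lt_succ_iff] at hm
          rw [hprod m n hm, hg]
          simp only [if_pos hm]
          exact mul_le_mul_right (aux_chernoff hmeas hindep hident N hφ m n) _
      _ ≤ ∑' m, g m n := ENNReal.sum_le_tsum _
  calc ∑' n, μ {ω | s - 1 < renewalSum Z n ω ∧ renewalSum Z n ω ≤ s}
      ≤ ∑' n, ∑' m, g m n := ENNReal.tsum_le_tsum step1
    _ = ∑' m, ∑' n, g m n := ENNReal.tsum_comm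
    _ = ∑' m, μ (B m) * (E * 2) := by
        apply tsum_congr
        intro m
        have hinj : Function.Injective (fun j : ℕ => m + j) := add_right_injective m
        have hsupp : Function.support (g m) ⊆ Set.range (fun j : ℕ => m + j) := by
          intro n hn
          rw [Function.mem_support, hg] at hn
          by_contra hc
          simp only [Set.mem_range] at hc
          have : ¬ m ≤ n := fun h => hc ⟨n - m, by omega⟩
          simp [this] at hn
        rw [← hinj.tsum_eq hsupp]
        have : ∀ j : ℕ, g m (m + j) = μ (B m) * (E * (1/2)^j) := by
          intro j
          rw [hg]
          simp
        simp_rw [this]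
        rw [ENNReal.tsum_mul_left, ENNReal.tsum_mul_left, ENNReal.tsum_geometric]
        norm_num
    _ = (∑' m, μ (B m)) * (E * 2) := ENNReal.tsum_mul_right
    _ ≤ 1 * (E * 2) := mul_le_mul_left hBsum _
    _ = E * 2 := one_mul _

end stmtAux

/-- Let `(Z_k)` be i.i.d. strictly positive random variables with
`P(Z₁ > x) ≤ C₀ e^{-γ₀ x}` for all `x ≥ 0`.  Then there are constants `C < ∞` and
`γ > 0` (independent of `t` and `x`) such that `P(R_t > x) ≤ C e^{-γ x}` for all
`t ≥ 0` and `x ≥ 0`. -/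
theorem stmt_11 {Ω : Type*} [MeasurableSpace Ω] (μ : Measure Ω) [IsProbabilityMeasure μ]
    (Z : ℕ → Ω → ℝ) (hmeas : ∀ k, Measurable (Z k))
    (hindep : iIndepFun Z μ)
    (hident : ∀ k, IdentDistrib (Z k) (Z 0) μ μ)
    (hpos : ∀ k ω, 0 < Z k ω)
    (C₀ γ₀ : ℝ) (hγ₀ : 0 < γ₀)
    (htail : ∀ x : ℝ, 0 ≤ x → μ {ω | x < Z 0 ω} ≤ ENNReal.ofReal (C₀ * Real.exp (-γ₀ * x))) :
    ∃ C γ : ℝ, 0 < γ ∧ ∀ t : ℝ, 0 ≤ t → ∀ x : ℝ, 0 ≤ x →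
      μ {ω | x < renewalResidual Z t ω} ≤ ENNReal.ofReal (C * Real.exp (-γ * x)) := by
  classical
  obtain ⟨N, hφ⟩ := aux_phi_small (μ := μ) hmeas hpos
  -- C₀ is positive
  have hC₀ : 0 < C₀ := by
    have h1 : μ {ω | (0:ℝ) < Z 0 ω} = 1 := by
      have : {ω | (0:ℝ) < Z 0 ω} = Set.univ := Set.eq_univ_of_forall (fun ω => hpos 0 ω)
      rw [this, measure_univ]
    have h2 := htail 0 le_rfl
    rw [h1] at h2
    simp only [mul_zero, Real.exp_zero, mul_one] at h2
    by_contra hc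
    push_neg at hc
    rw [ENNReal.ofReal_eq_zero.2 hc] at h2
    exact absurd h2 (by norm_num)
  have hexp1 : Real.exp (-γ₀) < 1 := Real.exp_lt_one_iff.2 (by linarith)
  have hden : 0 < 1 - Real.exp (-γ₀) := by linarith
  refine ⟨2 * Real.exp N * C₀ * (1 - Real.exp (-γ₀))⁻¹, γ₀, hγ₀, ?_⟩
  intro t ht x hx
  -- covering by A n
  set A : ℕ → Set Ω := fun n =>
    {ω | renewalSum Z n ω ≤ t ∧ x + (t - renewalSum Z n ω) < Z n ω} with hA
  have hScount : ∀ ω, renewalSum Z (renewalCount Z t ω) ω ≤ t := by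
    intro ω
    have h0 : 0 ∈ {n : ℕ | renewalSum Z n ω ≤ t} := by
      simp [renewalSum, ht]
    by_cases hbdd : BddAbove {n : ℕ | renewalSum Z n ω ≤ t}
    · exact Nat.sSup_mem ⟨0, h0⟩ hbdd
    · have : renewalCount Z t ω = 0 := by
        rw [renewalCount, csSup_of_not_bddAbove hbdd, csSup_empty]
        rfl
      rw [this]
      simpa [renewalSum] using ht
  have hcov : {ω | x < renewalResidual Z t ω} ⊆ ⋃ n, A n := by
    intro ω hω
    rw [Set.mem_setOf_eq, renewalResidual] at hω
    set n := renewalCount Z t ω with hn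
    have hsucc : renewalSum Z (n+1) ω = renewalSum Z n ω + Z n ω := Finset.sum_range_succ _ _
    rw [hsucc] at hω
    exact Set.mem_iUnion.2 ⟨n, hScount ω, by linarith⟩
  -- sets E and F
  set E : ℕ → ℕ → Set Ω := fun n j =>
    {ω | (t - (j:ℝ)) - 1 < renewalSum Z n ω ∧ renewalSum Z n ω ≤ t - (j:ℝ)} with hE
  set F : ℕ → ℕ → Set Ω := fun n j => {ω | x + (j:ℝ) < Z n ω} with hF
  have hAE : ∀ n, A n ⊆ ⋃ j : ℕ, (E n j ∩ F n j) := by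
    intro n ω hω
    obtain ⟨h1, h2⟩ := hω
    set j := Nat.floor (t - renewalSum Z n ω) with hj
    have ht0 : 0 ≤ t - renewalSum Z n ω := by linarith
    have hjle : (j:ℝ) ≤ t - renewalSum Z n ω := Nat.floor_le ht0
    have hjlt : t - renewalSum Z n ω < (j:ℝ) + 1 := Nat.lt_floor_add_one _
    refine Set.mem_iUnion.2 ⟨j, ⟨⟨by linarith, by linarith⟩, ?_⟩⟩
    rw [hF, Set.mem_setOf_eq]
    linarith
  -- measure bound per (n, j)
  set c : ℕ → ℝ≥0∞ := fun j => ENNReal.ofReal (C₀ * Real.exp (-γ₀ * (x + (j:ℝ)))) with hc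
  have hprod : ∀ n j, μ (E n j ∩ F n j) ≤ μ (E n j) * c j := by
    intro n j
    have hd : Disjoint (Finset.range n) ({n} : Finset ℕ) := by
      simp [Finset.disjoint_singleton_right]
    have hi := aux_indep_sum hindep hmeas hd
    have hsing : (fun ω => ∑ i ∈ ({n} : Finset ℕ), Z i ω) = Z n := by
      funext ω; exact Finset.sum_singleton _ _
    rw [hsing] at hi
    have hEeq : E n j = (fun ω => ∑ i ∈ Finset.range n, Z i ω) ⁻¹'
        (Set.Ioc ((t - (j:ℝ)) - 1) (t - (j:ℝ))) := rfl
    have hFeq : F n j = Z n ⁻¹' (Set.Ioi (x + (j:ℝ))) := rfl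
    have := hi.measure_inter_preimage_eq_mul (Set.Ioc ((t - (j:ℝ)) - 1) (t - (j:ℝ)))
      (Set.Ioi (x + (j:ℝ))) measurableSet_Ioc measurableSet_Ioi
    rw [hEeq, hFeq, this]
    apply mul_le_mul_right
    have hid : μ (Z n ⁻¹' (Set.Ioi (x + (j:ℝ)))) = μ (Z 0 ⁻¹' (Set.Ioi (x + (j:ℝ)))) :=
      (hident n).measure_mem_eq measurableSet_Ioi
    rw [hid]
    exact htail (x + (j:ℝ)) (by positivity)
  -- put it together
  have main : μ {ω | x < renewalResidual Z t ω}
      ≤ (ENNReal.ofReal (Real.exp N) * 2) * ∑' j, c j := by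
    calc μ {ω | x < renewalResidual Z t ω}
        ≤ μ (⋃ n, A n) := measure_mono hcov
      _ ≤ ∑' n, μ (A n) := measure_iUnion_le _
      _ ≤ ∑' n, ∑' j, μ (E n j) * c j := by
          apply ENNReal.tsum_le_tsum
          intro n
          calc μ (A n) ≤ μ (⋃ j : ℕ, (E n j ∩ F n j)) := measure_mono (hAE n)
            _ ≤ ∑' j, μ (E n j ∩ F n j) := measure_iUnion_le _
            _ ≤ ∑' j, μ (E n j) * c j := ENNReal.tsum_le_tsum (hprod n)
      _ = ∑' j, ∑' n, μ (E n j) * c j := ENNReal.tsum_comm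
      _ = ∑' j, (∑' n, μ (E n j)) * c j := by
          apply tsum_congr; intro j; rw [ENNReal.tsum_mul_right]
      _ ≤ ∑' j, (ENNReal.ofReal (Real.exp N) * 2) * c j := by
          apply ENNReal.tsum_le_tsum
          intro j
          exact mul_le_mul_left
            (aux_renewal_inc hmeas hindep hident hpos N hφ (t - (j:ℝ))) _
      _ = (ENNReal.ofReal (Real.exp N) * 2) * ∑' j, c j := ENNReal.tsum_mul_left
  -- compute geometric sum
  have hcsum : ∑' j, c j
      = ENNReal.ofReal (C₀ * Real.exp (-γ₀ * x)) * ENNReal.ofReal ((1 - Real.exp (-γ₀))⁻¹) := by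
    have hterm : ∀ j : ℕ, c j
        = ENNReal.ofReal (C₀ * Real.exp (-γ₀ * x)) * (ENNReal.ofReal (Real.exp (-γ₀)))^j := by
      intro j
      simp only [hc]
      have harg : -γ₀ * (x + (j:ℝ)) = -γ₀ * x + (j:ℝ) * (-γ₀) := by ring
      rw [harg, Real.exp_add, Real.exp_nat_mul, ← mul_assoc,
        ENNReal.ofReal_mul (by positivity), ENNReal.ofReal_pow (Real.exp_pos _).le]
    simp_rw [hterm]
    rw [ENNReal.tsum_mul_left, ENNReal.tsum_geometric]
    congr 1
    rw [← ENNReal.ofReal_one, ← ENNReal.ofReal_sub _ (Real.exp_pos _).le,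
      ENNReal.ofReal_inv_of_pos (by linarith)]
  rw [hcsum] at main
  refine le_trans main (le_of_eq ?_)
  rw [show (2:ℝ≥0∞) = ENNReal.ofReal 2 by norm_num]
  rw [← ENNReal.ofReal_mul (Real.exp_pos _).le, ← ENNReal.ofReal_mul (by positivity),
    ← ENNReal.ofReal_mul (by positivity)]
  congr 1
  ring
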